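/- Let f, g ∈ F_q(X) be nonconstant of degrees d and δ, and assume conditions (i) f(F_q) ⊂ g(F_q ∪ {∞}) and (ii) |{x ∈ F_q : g(x) = g(a)}| > δ/2 for all a ∈ F_q ∪ {∞} with at most 8(d+δ) exceptions. Then |{(x,y) ∈ F_q × F_q : f(x) = g(y)}| ≥ q(⌊δ/2⌋ + 1) − 2(d+δ)³. -/
import Mathlib


open Polynomial

open Classical in
/-- The value of a rational function `g` at `x ∈ F_q`, as an element of
`F_q ∪ {∞}`, modelled as `Option F_q` with `none = ∞`. -/
noncomputable def evalOpt {Fq : Type*} [Field Fq] (g : RatFunc Fq) (x : Fq) : Option Fq :=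
  if g.denom.eval x = 0 then none else some (g.num.eval x / g.denom.eval x)

open Classical in
/-- The value of a rational function `g` at a point of `F_q ∪ {∞}`. -/
noncomputable def evalExt {Fq : Type*} [Field Fq] (g : RatFunc Fq) : Option Fq → Option Fq
  | some x => evalOpt g x
  | none =>
    if g.denom.natDegree < g.num.natDegree then none
    else if g.num.natDegree < g.denom.natDegree then some 0
    else some (g.num.leadingCoeff / g.denom.leadingCoeff)

/-- The degree of a rational function `g = A/B` in lowest terms:
`max (deg A) (deg B)`. -/
noncomputable def degRF {Fq : Type*} [Field Fq] (g : RatFunc Fq) : ℕ :=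
  max g.num.natDegree g.denom.natDegree

lemma ncard_setOf_eq {α : Type*} [Fintype α] (p : α → Prop) [DecidablePred p] :
    Set.ncard {x | p x} = (Finset.univ.filter p).card := by
  classical
  rw [Set.ncard_eq_toFinset_card' _, Set.toFinset_setOf]

lemma ncard_eval_zero_le {F : Type*} [Field F] (p : F[X]) (hp : p ≠ 0) :
    Set.ncard {x : F | p.eval x = 0} ≤ p.natDegree := by
  classical
  have h : {x : F | p.eval x = 0} = ↑p.roots.toFinset := by
    ext x; simp [Polynomial.mem_roots, hp]
  rw [h, Set.ncard_coe_finset]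
  exact le_trans (Multiset.toFinset_card_le _) (Polynomial.card_roots' p)

lemma fiber_le_degRF {Fq : Type*} [Field Fq] (f : RatFunc Fq)
    (hf : ∀ c : Fq, f ≠ RatFunc.C c) (v : Option Fq) :
    Set.ncard {x : Fq | evalOpt f x = v} ≤ degRF f := by
  classical
  cases v with
  | none =>
    have h : {x : Fq | evalOpt f x = none} = {x : Fq | f.denom.eval x = 0} := by
      ext x; by_cases h : f.denom.eval x = 0 <;> simp [evalOpt, h]
    rw [h]
    exact le_trans (ncard_eval_zero_le _ (RatFunc.denom_ne_zero f)) (le_max_right _ _)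
  | some c =>
    set q : Fq[X] := f.num - C c * f.denom with hq
    have hq0 : q ≠ 0 := by
      intro h
      have hnum : f.num = C c * f.denom := sub_eq_zero.mp h
      apply hf c
      have hdd := RatFunc.num_div_denom f
      rw [hnum] at hdd
      rw [← hdd, map_mul, RatFunc.algebraMap_C, mul_div_assoc,
        div_self (RatFunc.algebraMap_ne_zero (RatFunc.denom_ne_zero f)), mul_one]
    have hsub : {x : Fq | evalOpt f x = some c} ⊆ {x : Fq | q.eval x = 0} := by
      intro x hx
      simp only [Set.mem_setOf_eq, evalOpt] at hx
      by_cases h : f.denom.eval x = 0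
      · simp [h] at hx
      · simp only [h, if_false, Option.some.injEq] at hx
        have hxe : f.num.eval x = c * f.denom.eval x := (div_eq_iff h).mp hx
        simp [hq, hxe]
    have hdeg : q.natDegree ≤ degRF f := by
      refine le_trans (natDegree_sub_le _ _) (max_le (le_max_left _ _) ?_)
      exact le_trans (natDegree_C_mul_le _ _) (le_max_right _ _)
    exact le_trans (Set.ncard_le_ncard hsub (Polynomial.finite_setOf_isRoot hq0))
      (le_trans (ncard_eval_zero_le q hq0) hdeg)

lemma one_le_degRF {Fq : Type*} [Field Fq] (g : RatFunc Fq)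
    (hg : ∀ c : Fq, g ≠ RatFunc.C c) : 1 ≤ degRF g := by
  by_contra h
  push_neg at h
  have hd0 : degRF g = 0 := by omega
  have hn : g.num.natDegree = 0 := by
    have := le_max_left g.num.natDegree g.denom.natDegree
    rw [← degRF] at this; omega
  have hden : g.denom.natDegree = 0 := by
    have := le_max_right g.num.natDegree g.denom.natDegree
    rw [← degRF] at this; omega
  obtain ⟨a, ha⟩ := Polynomial.natDegree_eq_zero.mp hn
  obtain ⟨b, hb⟩ := Polynomial.natDegree_eq_zero.mp hden
  apply hg (a / b)
  have hd := RatFunc.num_div_denom g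
  rw [← ha, ← hb] at hd
  rw [← hd, RatFunc.algebraMap_C, RatFunc.algebraMap_C, ← map_div₀]

/-- Let `f, g ∈ F_q(X)` be nonconstant of degrees `d` and `δ`.  Assume
(i) `f(F_q) ⊆ g(F_q ∪ {∞})` and (ii) `|{x ∈ F_q : g(x) = g(a)}| > δ/2` for all
`a ∈ F_q ∪ {∞}` with at most `8(d+δ)` exceptions.  Then
`|{(x,y) ∈ F_q × F_q : f(x) = g(y)}| ≥ q(⌊δ/2⌋ + 1) − 2(d+δ)³`. -/
theorem stmt_10 (Fq : Type*) [Field Fq] [Fintype Fq]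
    (f g : RatFunc Fq)
    (hf : ∀ c : Fq, f ≠ RatFunc.C c) (hg : ∀ c : Fq, g ≠ RatFunc.C c)
    (d δ : ℕ) (hd : d = degRF f) (hδ : δ = degRF g)
    (h1 : ∀ x : Fq, ∃ a : Option Fq, evalExt g a = evalOpt f x)
    (h2 : Set.ncard {a : Option Fq |
        ¬ δ < 2 * Set.ncard {x : Fq | evalOpt g x = evalExt g a}} ≤ 8 * (d + δ)) :
    (Set.ncard {p : Fq × Fq | evalOpt f p.1 = evalOpt g p.2} : ℤ)
      ≥ (Fintype.card Fq : ℤ) * ((δ / 2 : ℕ) + 1) - 2 * ((d : ℤ) + δ) ^ 3 := by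
  classical
  set m : ℕ := δ / 2 + 1 with hm
  set E : Finset (Option Fq) := Finset.univ.filter
    (fun a => ¬ δ < 2 * Set.ncard {x : Fq | evalOpt g x = evalExt g a}) with hE
  have hEcard : E.card ≤ 8 * (d + δ) := by
    rwa [ncard_setOf_eq] at h2
  -- points x whose value is reachable only via exceptional a are few
  set Good : Finset Fq := Finset.univ.filter
    (fun x => ∃ a, a ∉ E ∧ evalExt g a = evalOpt f x) with hGood
  have hbad : (Finset.univ.filter
      (fun x : Fq => ¬ ∃ a, a ∉ E ∧ evalExt g a = evalOpt f x)).card ≤ 8 * (d + δ) * d := by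
    have hsub : Finset.univ.filter (fun x : Fq => ¬ ∃ a, a ∉ E ∧ evalExt g a = evalOpt f x)
        ⊆ E.biUnion (fun a => Finset.univ.filter (fun x => evalOpt f x = evalExt g a)) := by
      intro x hx
      simp only [Finset.mem_filter, Finset.mem_univ, true_and, not_exists, not_and] at hx
      obtain ⟨a, ha⟩ := h1 x
      have haE : a ∈ E := by
        by_contra hcon
        exact hx a hcon ha
      exact Finset.mem_biUnion.mpr ⟨a, haE, by simp [ha.symm]⟩
    refine le_trans (Finset.card_le_card hsub) (le_trans Finset.card_biUnion_le ?_)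
    refine le_trans (Finset.sum_le_card_nsmul E _ d ?_) ?_
    · intro a _
      have hle := fiber_le_degRF f hf (evalExt g a)
      rw [ncard_setOf_eq] at hle
      rw [hd]
      exact hle
    · rw [smul_eq_mul]
      exact Nat.mul_le_mul_right _ hEcard
  have hGoodcard : Fintype.card Fq ≤ Good.card + 8 * (d + δ) * d := by
    have hsplit : Good.card + (Finset.univ.filter
        (fun x : Fq => ¬ ∃ a, a ∉ E ∧ evalExt g a = evalOpt f x)).card = Fintype.card Fq := by
      rw [hGood, ← Finset.card_univ]
      exact Finset.card_filter_add_card_filter_not _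
    omega
  -- each good x contributes at least m pairs
  have hfib : ∀ x ∈ Good,
      m ≤ (Finset.univ.filter (fun y : Fq => evalOpt f x = evalOpt g y)).card := by
    intro x hx
    simp only [hGood, Finset.mem_filter, Finset.mem_univ, true_and] at hx
    obtain ⟨a, haE, ha⟩ := hx
    have hkey : δ < 2 * Set.ncard {y : Fq | evalOpt g y = evalExt g a} := by
      by_contra hcon
      exact haE (Finset.mem_filter.mpr ⟨Finset.mem_univ _, hcon⟩)
    have hset : Finset.univ.filter (fun y : Fq => evalOpt f x = evalOpt g y)
        = Finset.univ.filter (fun y : Fq => evalOpt g y = evalExt g a) := by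
      apply Finset.filter_congr
      intro y _
      rw [← ha]
      exact ⟨Eq.symm, Eq.symm⟩
    rw [hset]
    rw [ncard_setOf_eq] at hkey
    omega
  -- assemble the pair count
  set T : Finset (Fq × Fq) := Good.biUnion
    (fun x => ({x} : Finset Fq) ×ˢ Finset.univ.filter (fun y => evalOpt f x = evalOpt g y))
    with hT
  have hTS : T ⊆ Finset.univ.filter (fun p : Fq × Fq => evalOpt f p.1 = evalOpt g p.2) := by
    intro p hp
    simp only [hT, Finset.mem_biUnion, Finset.mem_product, Finset.mem_singleton,
      Finset.mem_filter, Finset.mem_univ, true_and] at hp ⊢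
    obtain ⟨x, _, hp1, hp2⟩ := hp
    rw [hp1]
    exact hp2
  have hdisj : ∀ x ∈ Good, ∀ y ∈ Good, x ≠ y →
      Disjoint (({x} : Finset Fq) ×ˢ Finset.univ.filter (fun z => evalOpt f x = evalOpt g z))
        (({y} : Finset Fq) ×ˢ Finset.univ.filter (fun z => evalOpt f y = evalOpt g z)) := by
    intro x _ y _ hxy
    rw [Finset.disjoint_left]
    intro p hp hq
    simp only [Finset.mem_product, Finset.mem_singleton] at hp hq
    exact hxy (hp.1.symm.trans hq.1)
  have hTcard : Good.card * m ≤ T.card := by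
    rw [hT, Finset.card_biUnion hdisj]
    calc Good.card * m = ∑ _x ∈ Good, m := by rw [Finset.sum_const, smul_eq_mul]
      _ ≤ _ := by
        refine Finset.sum_le_sum (fun x hx => ?_)
        rw [Finset.card_product, Finset.card_singleton, one_mul]
        exact hfib x hx
  have hScard : Good.card * m ≤ Set.ncard {p : Fq × Fq | evalOpt f p.1 = evalOpt g p.2} := by
    rw [ncard_setOf_eq]
    exact le_trans hTcard (Finset.card_le_card hTS)
  -- arithmetic
  have hδ1 : 1 ≤ δ := hδ ▸ one_le_degRF g hg
  have hmδ : m ≤ δ := by omega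
  have hq : (Fintype.card Fq : ℤ) ≤ (Good.card : ℤ) + 8 * ((d : ℤ) + δ) * d := by
    exact_mod_cast hGoodcard
  have hS : (Good.card : ℤ) * m ≤
      (Set.ncard {p : Fq × Fq | evalOpt f p.1 = evalOpt g p.2} : ℤ) := by
    exact_mod_cast hScard
  have hmδ' : (m : ℤ) ≤ (δ : ℤ) := by exact_mod_cast hmδ
  have hd0 : (0 : ℤ) ≤ (d : ℤ) := Int.natCast_nonneg d
  have hδ0 : (0 : ℤ) ≤ (δ : ℤ) := Int.natCast_nonneg δ
  have hm0 : (0 : ℤ) ≤ (m : ℤ) := Int.natCast_nonneg m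
  have h3 : 8 * ((d : ℤ) + δ) * d * m ≤ 2 * ((d : ℤ) + δ) ^ 3 := by
    nlinarith [mul_nonneg (add_nonneg hd0 hδ0) (sq_nonneg ((d : ℤ) - δ)),
      mul_le_mul_of_nonneg_left hmδ' (by positivity : (0 : ℤ) ≤ 8 * ((d : ℤ) + δ) * d)]
  have hmz : ((δ / 2 : ℕ) : ℤ) + 1 = (m : ℤ) := by
    rw [hm]; push_cast; ring
  have hq' : (Fintype.card Fq : ℤ) * m ≤
      ((Good.card : ℤ) + 8 * ((d : ℤ) + δ) * d) * m :=
    mul_le_mul_of_nonneg_right hq hm0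
  rw [ge_iff_le, hmz]
  nlinarith [hq', hS, h3]
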